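/- arXiv:2110.12808 — 5 statements merged into one kernel-verified Lean document; each statement's English description precedes it below -/
import Mathlib

section
/- Let X be a T1 topological space, let f : 𝕊 → X be a continuous open surjection from the Sorgenfrey line onto X, and let A be an at most countable subset of X. If for every x ∈ X \ A the fiber f⁻¹(x) contains a nontrivial convergent sequence (i.e., a sequence of points of f⁻¹(x), not eventually constant, converging in the Sorgenfrey line), then X is second countable, i.e., the weight of X is countable. -/
/-!
A continuous open map `f` sends a countable family `𝓑` of open sets onto a base of `X` as
soon as every `x` has a preimage `y` such that each neighbourhood of `y` contains a member of
`𝓑` whose image still contains `x`. On the Sorgenfrey line take `𝓑` to be the intervals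
`[a, q)` with `q` rational and `a` either rational or a chosen preimage of a point of `A`. For
`x ∈ A` the chosen preimage `y` does the job. For `x ∉ A` let `y` be the limit of the
nontrivial sequence in the fibre: the fibre is closed, so `f y = x`, and every `[y, b)`
contains a fibre point `z > y`, which lies in some `[q, q') ⊆ [y, b)` with `q, q'` rational.
-/

open Set Filter Topology Function

/-- The Sorgenfrey line: the real line as a type synonym. -/
def SorgenfreyLine : Type := ℝ

notation "𝕊" => SorgenfreyLine

noncomputable instance : LinearOrder 𝕊 := inferInstanceAs (LinearOrder ℝ)
instance : RatCast 𝕊 := inferInstanceAs (RatCast ℝ)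

/-- The topology on the Sorgenfrey line, generated by half-open intervals `[a, b)`, `a < b`. -/
instance : TopologicalSpace 𝕊 :=
  TopologicalSpace.generateFrom {s : Set 𝕊 | ∃ a b : 𝕊, a < b ∧ s = Set.Ico a b}

theorem TopologicalSpace.secondCountableTopology_of_isOpenMap {Y X : Type*}
    [TopologicalSpace Y] [TopologicalSpace X] {f : Y → X} (hf : Continuous f)
    (hopen : IsOpenMap f) {𝓑 : Set (Set Y)} (h𝓑c : 𝓑.Countable) (h𝓑o : ∀ V ∈ 𝓑, IsOpen V)
    (h𝓑 : ∀ x, ∃ y, f y = x ∧ ∀ W ∈ 𝓝 y, ∃ V ∈ 𝓑, V ⊆ W ∧ x ∈ f '' V) :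
    SecondCountableTopology X := by
  refine (isTopologicalBasis_of_isOpen_of_nhds (s := image f '' 𝓑) ?_ ?_).secondCountableTopology
    (h𝓑c.image _)
  · rintro _ ⟨V, hV, rfl⟩
    exact hopen V (h𝓑o V hV)
  · intro x U hxU hU
    obtain ⟨y, rfl, hy⟩ := h𝓑 x
    obtain ⟨V, hV, hVU, hxV⟩ := hy _ (hf.continuousAt.preimage_mem_nhds (hU.mem_nhds hxU))
    exact ⟨f '' V, mem_image_of_mem _ hV, hxV, image_subset_iff.2 hVU⟩

namespace SorgenfreyLine

theorem exists_rat_btwn {a b : 𝕊} (h : a < b) : ∃ q : ℚ, a < q ∧ (q : 𝕊) < b :=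
  _root_.exists_rat_btwn (K := ℝ) h

theorem exists_rat_gt (a : 𝕊) : ∃ q : ℚ, a < q :=
  _root_.exists_rat_gt (K := ℝ) a

theorem isTopologicalBasis_Ico :
    TopologicalSpace.IsTopologicalBasis {s : Set 𝕊 | ∃ a b : 𝕊, a < b ∧ s = Ico a b} := by
  refine ⟨?_, ?_, rfl⟩
  · rintro _ ⟨a, b, -, rfl⟩ _ ⟨c, d, -, rfl⟩ x ⟨⟨hax, hxb⟩, hcx, hxd⟩
    refine ⟨Ico (max a c) (min b d), ⟨_, _, ?_, rfl⟩, ⟨max_le hax hcx, lt_min hxb hxd⟩, ?_⟩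
    · exact (max_le hax hcx).trans_lt (lt_min hxb hxd)
    · rw [Ico_inter_Ico]
  · refine eq_univ_of_forall fun x => ?_
    obtain ⟨q, hq⟩ := exists_rat_gt x
    exact ⟨Ico x q, ⟨x, q, hq, rfl⟩, le_rfl, hq⟩

theorem isOpen_Ico (a b : 𝕊) : IsOpen (Ico a b) := by
  rcases lt_or_ge a b with hab | hba
  · exact isTopologicalBasis_Ico.isOpen ⟨a, b, hab, rfl⟩
  · rw [Ico_eq_empty hba.not_gt]
    exact isOpen_empty

theorem mem_nhds_iff {x : 𝕊} {s : Set 𝕊} : s ∈ 𝓝 x ↔ ∃ b, x < b ∧ Ico x b ⊆ s := by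
  rw [isTopologicalBasis_Ico.mem_nhds_iff]
  constructor
  · rintro ⟨_, ⟨a, b, -, rfl⟩, ⟨hax, hxb⟩, hs⟩
    exact ⟨b, hxb, (Ico_subset_Ico_left hax).trans hs⟩
  · rintro ⟨b, hxb, hs⟩
    exact ⟨Ico x b, ⟨x, b, hxb, rfl⟩, ⟨le_rfl, hxb⟩, hs⟩

theorem exists_Ico_rat_subset {y : 𝕊} {W : Set 𝕊} (hW : W ∈ 𝓝 y) :
    ∃ q : ℚ, y < q ∧ Ico y q ⊆ W := by
  obtain ⟨b, hyb, hW⟩ := mem_nhds_iff.1 hW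
  obtain ⟨q, hyq, hqb⟩ := exists_rat_btwn hyb
  exact ⟨q, hyq, (Ico_subset_Ico_right hqb.le).trans hW⟩

theorem exists_mem_Ico_rat_subset_of_tendsto {ι : Type*} {l : Filter ι} {u : ι → 𝕊} {y : 𝕊}
    (hu : Tendsto u l (𝓝 y)) (hne : ¬ ∀ᶠ i in l, u i = y) {W : Set 𝕊} (hW : W ∈ 𝓝 y) :
    ∃ i, ∃ q q' : ℚ, u i ∈ Ico (q : 𝕊) q' ∧ Ico (q : 𝕊) q' ⊆ W := by
  obtain ⟨b, hyb, hW⟩ := mem_nhds_iff.1 hW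
  have hmem : ∀ᶠ i in l, u i ∈ Ico y b := hu (mem_nhds_iff.2 ⟨b, hyb, subset_rfl⟩)
  obtain ⟨i, hiy, hi⟩ := ((not_eventually.1 hne).and_eventually hmem).exists
  obtain ⟨q, hyq, hqi⟩ := exists_rat_btwn (lt_of_le_of_ne hi.1 (Ne.symm hiy))
  obtain ⟨q', hiq', hq'b⟩ := exists_rat_btwn hi.2
  exact ⟨i, q, q', ⟨hqi.le, hiq'⟩, (Ico_subset_Ico hyq.le hq'b.le).trans hW⟩

end SorgenfreyLine

/-- If `f : 𝕊 → X` is a continuous open surjection onto a T1 space, `A ⊆ X` is at most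
countable, and for every `x ∉ A` the fiber `f ⁻¹' {x}` contains a nontrivial (not eventually
constant) sequence converging in the Sorgenfrey line, then `X` is second countable. -/
theorem stmt0 {X : Type} [TopologicalSpace X] [T1Space X] (f : 𝕊 → X)
    (hf : Continuous f) (hopen : IsOpenMap f) (hsurj : Surjective f)
    (A : Set X) (hA : A.Countable)
    (hfib : ∀ x ∈ Set.univ \ A, ∃ u : ℕ → 𝕊, (∀ n, u n ∈ f ⁻¹' {x}) ∧
      (¬ ∃ c : 𝕊, ∀ᶠ n in atTop, u n = c) ∧ ∃ y : 𝕊, Tendsto u atTop (𝓝 y)) :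
    SecondCountableTopology X := by
  obtain ⟨g, hg⟩ := hsurj.hasRightInverse
  set C : Set 𝕊 := range ((↑) : ℚ → 𝕊) ∪ g '' A
  refine TopologicalSpace.secondCountableTopology_of_isOpenMap hf hopen
    (𝓑 := (fun p : 𝕊 × ℚ => Ico p.1 (p.2 : 𝕊)) '' (C ×ˢ univ))
    ((((countable_range _).union (hA.image g)).prod countable_univ).image _)
    (by rintro _ ⟨⟨a, q⟩, -, rfl⟩; exact SorgenfreyLine.isOpen_Ico _ _) fun x => ?_
  by_cases hxA : x ∈ A
  · refine ⟨g x, hg x, fun W hW => ?_⟩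
    obtain ⟨q, hq, hW⟩ := SorgenfreyLine.exists_Ico_rat_subset hW
    exact ⟨Ico (g x) q, ⟨(g x, q), ⟨.inr (mem_image_of_mem g hxA), trivial⟩, rfl⟩, hW,
      g x, ⟨le_rfl, hq⟩, hg x⟩
  · obtain ⟨u, hu, hne, y, hy⟩ := hfib x ⟨trivial, hxA⟩
    have hfy : f y = x :=
      (isClosed_singleton.preimage hf).mem_of_tendsto hy (Eventually.of_forall hu)
    refine ⟨y, hfy, fun W hW => ?_⟩
    obtain ⟨n, q, q', hn, hW⟩ :=
      SorgenfreyLine.exists_mem_Ico_rat_subset_of_tendsto hy (hne ⟨y, ·⟩) hW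
    exact ⟨Ico (q : 𝕊) q', ⟨(q, q'), ⟨.inl ⟨q, rfl⟩, trivial⟩, rfl⟩, hW, u n, hn, hu n⟩
end

section
/- Let X be a T1 regular topological space and let f : 𝕊 → X be a continuous open surjection from the Sorgenfrey line onto X. For rationals a < b, let P_{a,b} := { x ∈ [a, b) : for all y ∈ [a, b), f(y) = f(x) implies y = x }. Then for all rationals a < b, the set P_{a,b} is a closed subset of the Sorgenfrey line. -/
open Set Filter Topology Function

/-- `Pab f a b` is the set of points `x ∈ [a, b)` that are the unique point of `[a, b)`
mapped by `f` to `f x`. -/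
def Pab {X : Type*} (f : 𝕊 → X) (a b : 𝕊) : Set 𝕊 :=
  {x | x ∈ Set.Ico a b ∧ ∀ y ∈ Set.Ico a b, f y = f x → y = x}


/-! If `x ∈ s` shares its fiber with some `y ∈ s`, `y ≠ x`, separate `y` and `x` by disjoint open
sets `U, V ⊆ s`. As `f` is open and continuous, `f⁻¹' (f '' U) ∩ V` is an open neighbourhood of `x`,
and each of its points shares its fiber with a different point of `U`. Hence the points of a clopen
set `s` of a Hausdorff space that are alone in their fiber within `s` form a closed set; the
intervals `[a, b)` are clopen in the (Hausdorff) Sorgenfrey line. -/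

theorem IsClopen.isClosed_setOf_fiber_unique {Y X : Type*} [TopologicalSpace Y] [T2Space Y]
    [TopologicalSpace X] {f : Y → X} {s : Set Y} (hs : IsClopen s) (hf : Continuous f)
    (hfo : IsOpenMap f) : IsClosed {x | x ∈ s ∧ ∀ y ∈ s, f y = f x → y = x} := by
  rw [← isOpen_compl_iff, isOpen_iff_forall_mem_open]
  intro x hx
  by_cases hxs : x ∈ s
  · obtain ⟨y, hys, hfy, hyx⟩ : ∃ y ∈ s, f y = f x ∧ y ≠ x := by simpa [hxs] using hx
    obtain ⟨U, V, hU, hV, hyU, hxV, hUV⟩ := t2_separation hyx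
    refine ⟨f ⁻¹' (f '' (U ∩ s)) ∩ (V ∩ s), ?_,
      (hf.isOpen_preimage _ (hfo _ (hU.inter hs.isOpen))).inter (hV.inter hs.isOpen),
      ⟨y, ⟨hyU, hys⟩, hfy⟩, hxV, hxs⟩
    rintro z ⟨⟨w, ⟨hwU, hws⟩, hfw⟩, hzV, -⟩ ⟨-, hz⟩
    exact hUV.ne_of_mem hwU hzV (hz w hws hfw)
  · exact ⟨sᶜ, fun z hz hzP => hz hzP.1, hs.isClosed.isOpen_compl, hxs⟩

namespace SorgenfreyLine

instance : NoMaxOrder 𝕊 := inferInstanceAs (NoMaxOrder ℝ)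

theorem isOpen_Iio (a : 𝕊) : IsOpen (Iio a) :=
  isOpen_iff_forall_mem_open.2 fun x hx => ⟨Ico x a, fun _ hz => hz.2, isOpen_Ico x a, le_rfl, hx⟩

theorem isOpen_Ici (a : 𝕊) : IsOpen (Ici a) := by
  refine isOpen_iff_forall_mem_open.2 fun x hx => ?_
  obtain ⟨c, hxc⟩ := exists_gt x
  exact ⟨Ico x c, fun _ hz => le_trans hx hz.1, isOpen_Ico x c, le_rfl, hxc⟩

theorem isClopen_Ico (a b : 𝕊) : IsClopen (Ico a b) := by
  refine ⟨?_, isOpen_Ico a b⟩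
  simpa only [compl_Iio, compl_Ici, Ici_inter_Iio] using
    (isOpen_Iio a).isClosed_compl.inter (isOpen_Ici b).isClosed_compl

instance : T2Space 𝕊 := by
  refine ⟨fun x y hxy => ?_⟩
  rcases hxy.lt_or_gt with h | h
  · exact ⟨Iio y, Ici y, isOpen_Iio y, isOpen_Ici y, h, mem_Ici.2 le_rfl, Iio_disjoint_Ici le_rfl⟩
  · exact ⟨Ici x, Iio x, isOpen_Ici x, isOpen_Iio x, mem_Ici.2 le_rfl, h,
      (Iio_disjoint_Ici le_rfl).symm⟩

end SorgenfreyLine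

theorem stmt7_general {X : Type} [TopologicalSpace X] (f : 𝕊 → X)
    (hf : Continuous f) (hopen : IsOpenMap f)
    (a b : ℚ) :
    IsClosed (Pab f (a : 𝕊) (b : 𝕊)) :=
  (SorgenfreyLine.isClopen_Ico a b).isClosed_setOf_fiber_unique hf hopen

/-- For a continuous open surjection `f` from the Sorgenfrey line onto a T1 regular space and
rationals `a < b`, the set `P_{a,b}` is closed in the Sorgenfrey line. -/
theorem stmt7 {X : Type} [TopologicalSpace X] [T1Space X] [RegularSpace X] (f : 𝕊 → X)
    (hf : Continuous f) (hopen : IsOpenMap f) (hsurj : Surjective f)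
    (a b : ℚ) (hab : a < b) :
    IsClosed (Pab f (a : 𝕊) (b : 𝕊)) :=
  stmt7_general f hf hopen a b
end

section
/- Let X be a T1 regular topological space and let f : 𝕊 → X be a continuous open surjection from the Sorgenfrey line onto X. For rationals a < b, let P_{a,b} := { x ∈ [a, b) : for all y ∈ [a, b), f(y) = f(x) implies y = x }. Then for all rationals a < b, the restriction of f to P_{a,b} (with the subspace topology from the Sorgenfrey line) is a homeomorphism onto its image f[P_{a,b}] (with the subspace topology from X); equivalently, f restricted to P_{a,b} is an injective open embedding onto f[P_{a,b}]. -/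
open Set Filter Topology Function

/-! Since every point of `s` is the only point of the open set `U` over its image, the image of
a relatively open set `V ∩ s` is the trace on `f '' s` of the open set `f '' (V ∩ U)`. Hence an
open continuous map restricts to a homeomorphism `s ≃ₜ f '' s`. -/

theorem Set.InjOn.of_unique_fiber {α β : Type*} {f : α → β} {s U : Set α}
    (huniq : ∀ x ∈ s, ∀ y ∈ U, f y = f x → y = x) (hsU : s ⊆ U) : InjOn f s :=
  fun x hx y hy hxy => huniq y hy x (hsU hx) hxy

section UniqueFiber

variable {α β : Type*} [TopologicalSpace α] [TopologicalSpace β] {f : α → β} {s U : Set α}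

theorem IsOpenMap.imageFactorization_of_unique_fiber (hf : IsOpenMap f) (hU : IsOpen U)
    (huniq : ∀ x ∈ s, ∀ y ∈ U, f y = f x → y = x) (hsU : s ⊆ U) :
    IsOpenMap (s.imageFactorization f) := by
  intro W hW
  obtain ⟨V, hV, rfl⟩ := isOpen_induced_iff.mp hW
  have himage : s.imageFactorization f '' (Subtype.val ⁻¹' V) =
      Subtype.val ⁻¹' (f '' (V ∩ U)) := by
    ext ⟨_, x, hx, rfl⟩
    constructor
    · rintro ⟨y, hyV, hxy⟩
      exact ⟨y, ⟨hyV, hsU y.2⟩, congrArg Subtype.val hxy⟩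
    · rintro ⟨y, ⟨hyV, hyU⟩, hxy⟩
      obtain rfl := huniq x hx y hyU hxy
      exact ⟨⟨y, hx⟩, hyV, rfl⟩
  rw [himage]
  exact (hf _ (hV.inter hU)).preimage continuous_subtype_val

noncomputable def Homeomorph.imageOfUniqueFiber (hf : Continuous f) (hopen : IsOpenMap f)
    (hU : IsOpen U) (huniq : ∀ x ∈ s, ∀ y ∈ U, f y = f x → y = x) (hsU : s ⊆ U) :
    s ≃ₜ f '' s :=
  (Equiv.ofBijective (s.imageFactorization f)
      ⟨(Set.InjOn.of_unique_fiber huniq hsU).imageFactorization_injective,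
        imageFactorization_surjective⟩).toHomeomorphOfContinuousOpen
    ((hf.comp continuous_subtype_val).subtype_mk _)
    (hopen.imageFactorization_of_unique_fiber hU huniq hsU)

end UniqueFiber

theorem SorgenfreyLine.isOpen_Ico_s8 (p q : 𝕊) : IsOpen (Ico p q) := by
  rcases lt_or_ge p q with hpq | hqp
  · exact TopologicalSpace.isOpen_generateFrom_of_mem ⟨p, q, hpq, rfl⟩
  · rw [Ico_eq_empty_of_le hqp]
    exact isOpen_empty

theorem stmt8_general {X : Type} [TopologicalSpace X] (f : 𝕊 → X)
    (hf : Continuous f) (hopen : IsOpenMap f)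
    (a b : ℚ) :
    ∃ e : (Pab f (a : 𝕊) (b : 𝕊)) ≃ₜ (f '' Pab f (a : 𝕊) (b : 𝕊) : Set X),
      ∀ x : Pab f (a : 𝕊) (b : 𝕊), (e x : X) = f x :=
  ⟨Homeomorph.imageOfUniqueFiber hf hopen (SorgenfreyLine.isOpen_Ico_s8 a b)
      (fun _ hx => hx.2) (fun _ hx => hx.1), fun _ => rfl⟩

/-- For a continuous open surjection `f` from the Sorgenfrey line onto a T1 regular space and
rationals `a < b`, the restriction of `f` to `P_{a,b}` is a homeomorphism onto its image. -/
theorem stmt8 {X : Type} [TopologicalSpace X] [T1Space X] [RegularSpace X] (f : 𝕊 → X)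
    (hf : Continuous f) (hopen : IsOpenMap f) (hsurj : Surjective f)
    (a b : ℚ) (hab : a < b) :
    ∃ e : (Pab f (a : 𝕊) (b : 𝕊)) ≃ₜ (f '' Pab f (a : 𝕊) (b : 𝕊) : Set X),
      ∀ x : Pab f (a : 𝕊) (b : 𝕊), (e x : X) = f x :=
  stmt8_general f hf hopen a b
end

section
/- Let X be a T1 regular topological space and let f : 𝕊 → X be a continuous open surjection from the Sorgenfrey line onto X. For rationals a < b, let P_{a,b} := { x ∈ [a, b) : for all y ∈ [a, b), f(y) = f(x) implies y = x }. Then for all rationals a < b, the image f[P_{a,b}] is a closed subset of the subspace f[[a, b)] of X. -/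
open Set Filter Topology Function

/-
A point `q = f x` of `f [a, b)` outside `f P_{a,b}` has two preimages `u < v` in `[a, b)`.
Since `f` is open, `f [u, v) ∩ f [v, b)` is a neighbourhood of `q`; a point of it in `f P_{a,b}`
would have a unique preimage in `[a, b)` lying both in `[u, v)` and in `[v, b)`, which is
impossible. So `q` is not in the closure of `f P_{a,b}`.
-/

namespace SorgenfreyLine

lemma isOpen_Ico_s11 (u v : 𝕊) : IsOpen (Ico u v) := by
  rcases lt_or_ge u v with huv | hvu
  · exact TopologicalSpace.isOpen_generateFrom_of_mem ⟨u, v, huv, rfl⟩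
  · rw [Ico_eq_empty_of_le hvu]
    exact isOpen_empty

variable {X : Type*} {f : 𝕊 → X} {a b : 𝕊}

lemma exists_lt_of_image_notMem_image_Pab {x : 𝕊} (hx : x ∈ Ico a b)
    (hfx : f x ∉ f '' Pab f a b) :
    ∃ u v, a ≤ u ∧ u < v ∧ v < b ∧ f u = f x ∧ f v = f x := by
  obtain ⟨y, hy, hfy, hyx⟩ : ∃ y ∈ Ico a b, f y = f x ∧ y ≠ x := by
    by_contra! hunique
    exact hfx ⟨x, ⟨hx, hunique⟩, rfl⟩
  rcases Ne.lt_or_gt hyx with hlt | hlt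
  · exact ⟨y, x, hy.1, hlt, hx.2, hfy, rfl⟩
  · exact ⟨x, y, hx.1, hlt, hy.2, rfl, hfy⟩

lemma disjoint_image_Ico_inter_image_Ico_image_Pab {u v : 𝕊} (hau : a ≤ u) :
    Disjoint (f '' Ico u v ∩ f '' Ico v b) (f '' Pab f a b) := by
  rw [Set.disjoint_left]
  rintro _ ⟨⟨x₁, hx₁, rfl⟩, ⟨x₂, hx₂, hfx₂⟩⟩ ⟨p, hp, hfp⟩
  have hx₁₂ : x₁ < x₂ := hx₁.2.trans_le hx₂.1
  have hx₁p : x₁ = p := hp.2 x₁ ⟨hau.trans hx₁.1, hx₁₂.trans hx₂.2⟩ hfp.symm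
  have hx₂p : x₂ = p := hp.2 x₂ ⟨hau.trans hx₁.1 |>.trans hx₁₂.le, hx₂.2⟩ (hfx₂.trans hfp.symm)
  exact hx₁₂.ne (hx₁p.trans hx₂p.symm)

lemma exists_isOpen_disjoint_image_Pab [TopologicalSpace X] (hopen : IsOpenMap f) {q : X}
    (hq : q ∈ f '' Ico a b) (hqP : q ∉ f '' Pab f a b) :
    ∃ U, IsOpen U ∧ q ∈ U ∧ Disjoint U (f '' Pab f a b) := by
  obtain ⟨x, hx, rfl⟩ := hq
  obtain ⟨u, v, hau, huv, hvb, hfu, hfv⟩ := exists_lt_of_image_notMem_image_Pab hx hqP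
  refine ⟨f '' Ico u v ∩ f '' Ico v b, (hopen _ (isOpen_Ico_s11 u v)).inter (hopen _ (isOpen_Ico_s11 v b)),
    ⟨⟨u, ⟨le_rfl, huv⟩, hfu⟩, ⟨v, ⟨le_rfl, hvb⟩, hfv⟩⟩,
    disjoint_image_Ico_inter_image_Ico_image_Pab hau⟩

end SorgenfreyLine

theorem stmt11_general {X : Type} [TopologicalSpace X] (f : 𝕊 → X)
    (hopen : IsOpenMap f)
    (a b : ℚ) :
    IsClosed (Subtype.val ⁻¹' (f '' Pab f (a : 𝕊) (b : 𝕊)) :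
      Set (f '' Set.Ico (a : 𝕊) (b : 𝕊) : Set X)) := by
  rw [isClosed_preimage_val]
  rintro q ⟨hq, hq_closure⟩
  by_contra hqP
  obtain ⟨U, hU, hqU, hUP⟩ := SorgenfreyLine.exists_isOpen_disjoint_image_Pab hopen hq hqP
  exact (hUP.closure_right hU).notMem_of_mem_left hqU
    (closure_mono inter_subset_right hq_closure)

/-- For a continuous open surjection `f` from the Sorgenfrey line onto a T1 regular space and
rationals `a < b`, the image `f '' P_{a,b}` is closed in the subspace `f '' [a, b)` of `X`. -/
theorem stmt11 {X : Type} [TopologicalSpace X] [T1Space X] [RegularSpace X] (f : 𝕊 → X)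
    (hf : Continuous f) (hopen : IsOpenMap f) (hsurj : Surjective f)
    (a b : ℚ) (hab : a < b) :
    IsClosed (Subtype.val ⁻¹' (f '' Pab f (a : 𝕊) (b : 𝕊)) :
      Set (f '' Set.Ico (a : 𝕊) (b : 𝕊) : Set X)) :=
  stmt11_general f hopen a b
end

section
/- Let X be a T1 topological space, let f : 𝕊 → X be a continuous open surjection from the Sorgenfrey line onto X, and let x ∈ X be such that the fiber f⁻¹(x) contains a nontrivial convergent sequence (a sequence of points of f⁻¹(x), not eventually constant, converging in the Sorgenfrey line). Then the countable family { f[(a, b)] : a, b ∈ ℚ, a < b } contains a neighborhood base at x; in particular, X is first countable at x. -/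
/-!
The fiber `f ⁻¹' {x}` is closed, so it contains the limit `y` of the sequence. Convergence in
the Sorgenfrey line is convergence from the right, and a sequence that is not eventually
constant therefore has terms of the fiber strictly to the right of `y` in every basic
neighbourhood `[y, b)`. Such a term lies in an open interval with rational endpoints inside
`[a, b) ⊆ f ⁻¹' U`, whose image is the required member of the family.
-/

open Set Filter Topology Function

namespace SorgenfreyLine

theorem Ico_mem_nhds {y b : 𝕊} (h : y < b) : Ico y b ∈ 𝓝 y :=
  (isTopologicalBasis_Ico.isOpen ⟨y, b, h, rfl⟩).mem_nhds ⟨le_rfl, h⟩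

theorem frequently_mem_Ioo_of_tendsto {u : ℕ → 𝕊} {y b : 𝕊} (hy : Tendsto u atTop (𝓝 y))
    (hne : ¬ ∃ c : 𝕊, ∀ᶠ n in atTop, u n = c) (hb : y < b) :
    ∃ᶠ n in atTop, u n ∈ Ioo y b := by
  have hfreq : ∃ᶠ n in atTop, u n ≠ y := not_eventually.1 fun h => hne ⟨y, h⟩
  refine (hfreq.and_eventually (hy.eventually (Ico_mem_nhds hb))).mono ?_
  rintro n ⟨hny, hyn, hnb⟩
  exact ⟨hyn.lt_of_ne' hny, hnb⟩

theorem exists_rat_Ioo_subset {z a b : 𝕊} (hz : z ∈ Ioo a b) :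
    ∃ q₁ q₂ : ℚ, z ∈ Ioo (q₁ : 𝕊) (q₂ : 𝕊) ∧ Ioo (q₁ : 𝕊) (q₂ : 𝕊) ⊆ Ioo a b := by
  obtain ⟨q₁, haq, hqz⟩ := exists_rat_btwn hz.1
  obtain ⟨q₂, hzq, hqb⟩ := exists_rat_btwn hz.2
  exact ⟨q₁, q₂, ⟨hqz, hzq⟩, Ioo_subset_Ioo haq.le hqb.le⟩

end SorgenfreyLine

open SorgenfreyLine in
theorem stmt13_general {X : Type} [TopologicalSpace X] [T1Space X] (f : 𝕊 → X)
    (hf : Continuous f) (x : X)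
    (hfib : ∃ u : ℕ → 𝕊, (∀ n, u n ∈ f ⁻¹' {x}) ∧
      (¬ ∃ c : 𝕊, ∀ᶠ n in atTop, u n = c) ∧ ∃ y : 𝕊, Tendsto u atTop (𝓝 y)) :
    ∀ U ∈ 𝓝 x, ∃ a b : ℚ, a < b ∧ x ∈ f '' Set.Ioo (a : 𝕊) (b : 𝕊) ∧
      f '' Set.Ioo (a : 𝕊) (b : 𝕊) ⊆ U := by
  obtain ⟨u, hu, hne, y, hy⟩ := hfib
  have hfy : y ∈ f ⁻¹' {x} :=
    (isClosed_singleton.preimage hf).mem_of_tendsto hy (Eventually.of_forall hu)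
  intro U hU
  obtain ⟨V, hVU, hVopen, hxV⟩ := mem_nhds_iff.1 hU
  obtain ⟨_, ⟨a, b, -, rfl⟩, ⟨hay, hyb⟩, habV⟩ :=
    isTopologicalBasis_Ico.exists_subset_of_mem_open (show f y ∈ V from hfy ▸ hxV)
      (hVopen.preimage hf)
  obtain ⟨n, hyn, hnb⟩ := (frequently_mem_Ioo_of_tendsto hy hne hyb).exists
  obtain ⟨q₁, q₂, hn, hq⟩ :=
    exists_rat_Ioo_subset (show u n ∈ Ioo a b from ⟨hay.trans_lt hyn, hnb⟩)
  refine ⟨q₁, q₂, (Rat.cast_lt (K := ℝ)).1 (hn.1.trans hn.2), ⟨u n, hn, hu n⟩, ?_⟩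
  rintro _ ⟨z, hz, rfl⟩
  exact hVU (habV (Ioo_subset_Ico_self (hq hz)))

/-- If `f : 𝕊 → X` is a continuous open surjection onto a T1 space and the fiber over `x`
contains a nontrivial (not eventually constant) sequence converging in the Sorgenfrey line,
then the family `{f '' (a, b) : a < b ∈ ℚ}` contains a neighborhood base at `x`. -/
theorem stmt13 {X : Type} [TopologicalSpace X] [T1Space X] (f : 𝕊 → X)
    (hf : Continuous f) (hopen : IsOpenMap f) (hsurj : Surjective f) (x : X)
    (hfib : ∃ u : ℕ → 𝕊, (∀ n, u n ∈ f ⁻¹' {x}) ∧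
      (¬ ∃ c : 𝕊, ∀ᶠ n in atTop, u n = c) ∧ ∃ y : 𝕊, Tendsto u atTop (𝓝 y)) :
    ∀ U ∈ 𝓝 x, ∃ a b : ℚ, a < b ∧ x ∈ f '' Set.Ioo (a : 𝕊) (b : 𝕊) ∧
      f '' Set.Ioo (a : 𝕊) (b : 𝕊) ⊆ U :=
  stmt13_general f hf x hfib
end
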